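/- Under the hypotheses dim Υ^{(n)} = 1 and Υ^{(n+1)} = 0, the operator θ⊗θ on V⊗V commutes with the Hecke symmetry R; consequently θ extends to graded algebra automorphisms of Λ(V,R) and S(V,R). -/

import Mathlib

/-!
Write `T_ρ = (T_{n-1} ⋯ T_0)(T_n ⋯ T_1)` (generators indexed from `0`) in the Hecke algebra
of `S_{n+2}`. Using only the braid relations, `T_ρ T_0 = T_n T_ρ`. Applying the defining property
of `θ` twice gives `T_ρ (u ⊗ v ⊗ t) = t ⊗ θu ⊗ θv`, so evaluating both sides of that relation on
`u ⊗ v ⊗ t` yields `t ⊗ (θ ⊗ θ) R (u ⊗ v) = t ⊗ R (θu ⊗ θv)`, and `t ≠ 0` cancels.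
Once `θ ⊗ θ`, and hence `θ⁻¹ ⊗ θ⁻¹`, commutes with `R`, the automorphism of `T(V)` induced by
`θ` maps `Im (R - q)` and `Ker (R - q)` onto themselves and so descends to `S(V,R)` and `Λ(V,R)`.
-/

/-- The basic transposition `τ_i = (i, i+1)` (0-based) as a permutation of `ℕ`. -/
def tau (i : ℕ) : Equiv.Perm ℕ := Equiv.swap i (i + 1)

/-- The Coxeter length of a permutation of `{0, …, n-1}`, computed as its number of
inversions. -/
def invLen (n : ℕ) (σ : Equiv.Perm ℕ) : ℕ :=
  ((Finset.range n ×ˢ Finset.range n).filter (fun p => p.1 < p.2 ∧ σ p.2 < σ p.1)).card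

/-- The canonical embedding of the symmetric group `S_n = Perm (Fin n)` into the
permutations of `ℕ` (fixing every `m ≥ n`). -/
def permOfFin {n : ℕ} (σ : Equiv.Perm (Fin n)) : Equiv.Perm ℕ :=
  σ.extendDomain Fin.equivSubtype

/-- `σ` is a distinguished left coset representative of the Young subgroup `S_{a,b}`
of `S_{a+b}`: it is increasing on the blocks `{0,…,a-1}` and `{a,…,a+b-1}`. -/
def isDist (a b : ℕ) (σ : Equiv.Perm ℕ) : Prop :=
  ∀ i : ℕ, i + 1 < a + b → i + 1 ≠ a → σ i < σ (i + 1)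

/-- The cycle `i ↷ j`: for `i < j` it is `τ_i τ_{i+1} ⋯ τ_{j-1}`; for `i > j` it is
`τ_{i-1} ⋯ τ_{j+1} τ_j`; for `i = j` the identity. -/
def cyc (i j : ℕ) : Equiv.Perm ℕ :=
  if i ≤ j then ((List.range (j - i)).map (fun t => tau (i + t))).prod
  else ((List.range (i - j)).map (fun t => tau (i - 1 - t))).prod

open scoped TensorProduct

variable (K V : Type*) [Field K] [AddCommGroup V] [Module K V]

/-- The multiplication equivalence `V^{⊗a} ⊗ V^{⊗b} ≃ V^{⊗(a+b)}`. -/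
noncomputable def mulPow (a b : ℕ) :
    ((⨂[K] _ : Fin a, V) ⊗[K] (⨂[K] _ : Fin b, V)) ≃ₗ[K] (⨂[K] _ : Fin (a + b), V) :=
  (PiTensorProduct.tmulEquiv K V).trans
    (PiTensorProduct.reindex K (fun _ => V) finSumFinEquiv)

/-- Transport along an equality of tensor power sizes. -/
noncomputable def castPow {a b : ℕ} (h : a = b) :
    (⨂[K] _ : Fin a, V) ≃ₗ[K] (⨂[K] _ : Fin b, V) :=
  PiTensorProduct.reindex K (fun _ => V) (finCongr h)

/-- The canonical equivalence `V^{⊗1} ≃ V`. -/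
noncomputable def oneEquiv : (⨂[K] _ : Fin 1, V) ≃ₗ[K] V :=
  PiTensorProduct.subsingletonEquiv (0 : Fin 1)

/-- The canonical equivalence `V^{⊗2} ≃ V ⊗ V`. -/
noncomputable def pairEquiv : (⨂[K] _ : Fin 2, V) ≃ₗ[K] V ⊗[K] V :=
  (castPow K V (show (2 : ℕ) = 1 + 1 by omega)).trans
    ((mulPow K V 1 1).symm.trans (TensorProduct.congr (oneEquiv K V) (oneEquiv K V)))

/-- The operator `Id^{⊗a} ⊗ R ⊗ Id^{⊗b}` on `V^{⊗(a+2+b)}`. -/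
noncomputable def TOpAux (R : V ⊗[K] V →ₗ[K] V ⊗[K] V) (a b : ℕ) :
    Module.End K (⨂[K] _ : Fin (a + (2 + b)), V) :=
  let e : (⨂[K] _ : Fin (a + (2 + b)), V) ≃ₗ[K]
      (⨂[K] _ : Fin a, V) ⊗[K] ((V ⊗[K] V) ⊗[K] (⨂[K] _ : Fin b, V)) :=
    (mulPow K V a (2 + b)).symm.trans
      (TensorProduct.congr (LinearEquiv.refl K _)
        ((mulPow K V 2 b).symm.trans
          (TensorProduct.congr (pairEquiv K V) (LinearEquiv.refl K _))))
  e.symm.toLinearMap ∘ₗ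
    TensorProduct.map LinearMap.id (TensorProduct.map R LinearMap.id) ∘ₗ e.toLinearMap

/-- The operator `T_i^{(n)} = Id^{⊗i} ⊗ R ⊗ Id^{⊗(n-i-2)}` on `V^{⊗n}` (0-based `i`,
acting on the tensor slots `i` and `i+1`); the identity if `i + 2 > n`. -/
noncomputable def TOp (R : V ⊗[K] V →ₗ[K] V ⊗[K] V) (n i : ℕ) :
    Module.End K (⨂[K] _ : Fin n, V) :=
  if h : i + 2 ≤ n then
    (castPow K V (show i + (2 + (n - i - 2)) = n by omega)).toLinearMap ∘ₗ
      TOpAux K V R i (n - i - 2) ∘ₗ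
        (castPow K V (show n = i + (2 + (n - i - 2)) by omega)).toLinearMap
  else LinearMap.id

/-- The subspace `Υ^{(n)} = ⋂_{i} (T_i − q)·V^{⊗n}` of `V^{⊗n}`
(with `Υ^{(0)} = k`, `Υ^{(1)} = V`, `Υ^{(2)} = Im(R − q·Id)`). -/
noncomputable def Ups (R : V ⊗[K] V →ₗ[K] V ⊗[K] V) (q : K) (n : ℕ) :
    Submodule K (⨂[K] _ : Fin n, V) :=
  ⨅ i ∈ Finset.range (n - 1), LinearMap.range (TOp K V R n i - q • LinearMap.id)

/-- The multiplication map `V ⊗ V → T(V)`, `x ⊗ y ↦ ι(x)·ι(y)`, into the tensor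
algebra. -/
noncomputable def mur : V ⊗[K] V →ₗ[K] TensorAlgebra K V :=
  TensorProduct.lift
    (((LinearMap.mul K (TensorAlgebra K V)).comp (TensorAlgebra.ι K)).compl₂
      (TensorAlgebra.ι K))

/-- The relation on `T(V)` whose generators are the elements of `Im(R − q·Id)`
(viewed in degree 2); `T(V)` modulo this relation is the `R`-symmetric algebra
`S(V,R)`. -/
def relS (R : V ⊗[K] V →ₗ[K] V ⊗[K] V) (q : K) :
    TensorAlgebra K V → TensorAlgebra K V → Prop :=
  fun x y => y = 0 ∧ ∃ w : V ⊗[K] V, x = mur K V ((R - q • (LinearMap.id : V ⊗[K] V →ₗ[K] V ⊗[K] V)) w)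

/-- The relation on `T(V)` whose generators are the elements of `Ker(R − q·Id)`
(viewed in degree 2); `T(V)` modulo this relation is the `R`-exterior algebra
`Λ(V,R)`. -/
def relL (R : V ⊗[K] V →ₗ[K] V ⊗[K] V) (q : K) :
    TensorAlgebra K V → TensorAlgebra K V → Prop :=
  fun x y => y = 0 ∧ ∃ w : V ⊗[K] V, (R - q • (LinearMap.id : V ⊗[K] V →ₗ[K] V ⊗[K] V)) w = 0 ∧ x = mur K V w

variable {K V}

open PiTensorProduct

section TensorPower

lemma castPow_tprod {a b : ℕ} (h : a = b) (f : Fin a → V) :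
    castPow K V h (tprod K f) = tprod K (fun j => f (Fin.cast h.symm j)) := by
  simp [castPow, reindex_tprod]

lemma mulPow_tprod (a b : ℕ) (f : Fin a → V) (g : Fin b → V) :
    mulPow K V a b (tprod K f ⊗ₜ[K] tprod K g)
      = tprod K (fun j => Sum.elim f g (finSumFinEquiv.symm j)) := by
  simp [mulPow, reindex_tprod]

lemma mulPow_symm_tprod (a b : ℕ) (f : Fin (a + b) → V) :
    (mulPow K V a b).symm (tprod K f)
      = tprod K (fun j => f (Fin.castAdd b j)) ⊗ₜ[K] tprod K (fun j => f (Fin.natAdd a j)) := by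
  rw [LinearEquiv.symm_apply_eq, mulPow_tprod]
  congr 1
  funext j
  refine Fin.addCases (fun i => ?_) (fun i => ?_) j <;> simp

lemma oneEquiv_symm_apply (v : V) : (oneEquiv K V).symm v = tprod K (fun _ => v) := by
  rw [LinearEquiv.symm_apply_eq, oneEquiv, subsingletonEquiv_apply_tprod]

lemma pairEquiv_tprod (f : Fin 2 → V) : pairEquiv K V (tprod K f) = f 0 ⊗ₜ[K] f 1 := by
  simp only [pairEquiv, LinearEquiv.trans_apply, castPow_tprod, mulPow_symm_tprod,
    TensorProduct.congr_tmul, oneEquiv, subsingletonEquiv_apply_tprod]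
  congr 2

lemma pairEquiv_symm_tmul (x y : V) : (pairEquiv K V).symm (x ⊗ₜ[K] y) = tprod K ![x, y] := by
  rw [LinearEquiv.symm_apply_eq, pairEquiv_tprod]
  rfl

end TensorPower

section PureTensor

def updatePair {α : Type*} {N : ℕ} (f : Fin N → α) (i : ℕ) (x y : α) : Fin N → α :=
  fun j => if (j : ℕ) = i then x else if (j : ℕ) = i + 1 then y else f j

lemma updatePair_cons {α : Type*} {M : ℕ} (f : Fin M → α) (u : α) (i : ℕ) (x y : α) :
    updatePair (Fin.cons u f : Fin (M + 1) → α) (i + 1) x y = Fin.cons u (updatePair f i x y) := by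
  funext j
  refine Fin.cases ?_ (fun k => ?_) j <;> simp [updatePair]

lemma updatePair_snoc {α : Type*} {M : ℕ} (f : Fin M → α) (w : α) {i : ℕ} (h : i + 2 ≤ M)
    (x y : α) :
    updatePair (Fin.snoc f w : Fin (M + 1) → α) i x y = Fin.snoc (updatePair f i x y) w := by
  funext j
  refine Fin.lastCases ?_ (fun k => ?_) j
  · simp (disch := omega) [updatePair, if_neg]
  · simp [updatePair]

variable (K V) in
noncomputable def splitPairEquiv (a b : ℕ) :
    (⨂[K] _ : Fin (a + (2 + b)), V) ≃ₗ[K]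
      (⨂[K] _ : Fin a, V) ⊗[K] ((V ⊗[K] V) ⊗[K] (⨂[K] _ : Fin b, V)) :=
  (mulPow K V a (2 + b)).symm.trans
    (TensorProduct.congr (LinearEquiv.refl K _)
      ((mulPow K V 2 b).symm.trans
        (TensorProduct.congr (pairEquiv K V) (LinearEquiv.refl K _))))

lemma TOpAux_eq_conj (R : V ⊗[K] V →ₗ[K] V ⊗[K] V) (a b : ℕ) : TOpAux K V R a b =
    (splitPairEquiv K V a b).symm.toLinearMap ∘ₗ
      TensorProduct.map LinearMap.id (TensorProduct.map R LinearMap.id) ∘ₗ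
        (splitPairEquiv K V a b).toLinearMap := rfl

lemma splitPairEquiv_tprod (a b : ℕ) (g : Fin (a + (2 + b)) → V) :
    splitPairEquiv K V a b (tprod K g)
      = tprod K (fun j : Fin a => g (Fin.castAdd (2 + b) j)) ⊗ₜ[K]
          ((g ⟨a, by omega⟩ ⊗ₜ[K] g ⟨a + 1, by omega⟩) ⊗ₜ[K]
            tprod K (fun j : Fin b => g (Fin.natAdd a (Fin.natAdd 2 j)))) := by
  simp only [splitPairEquiv, LinearEquiv.trans_apply, mulPow_symm_tprod, TensorProduct.congr_tmul,
    LinearEquiv.refl_apply, pairEquiv_tprod]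
  rfl

lemma TOpAux_tprod (R : V ⊗[K] V →ₗ[K] V ⊗[K] V) (a b : ℕ) (f : Fin (a + (2 + b)) → V)
    (S : Finset (V × V))
    (hS : R (f ⟨a, by omega⟩ ⊗ₜ[K] f ⟨a + 1, by omega⟩) = ∑ p ∈ S, p.1 ⊗ₜ[K] p.2) :
    TOpAux K V R a b (tprod K f) = ∑ p ∈ S, tprod K (updatePair f a p.1 p.2) := by
  simp only [TOpAux_eq_conj, LinearMap.coe_comp, Function.comp_apply, LinearEquiv.coe_coe]
  rw [splitPairEquiv_tprod, TensorProduct.map_tmul, TensorProduct.map_tmul, hS,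
    TensorProduct.sum_tmul, TensorProduct.tmul_sum, map_sum]
  refine Finset.sum_congr rfl fun p _ => ?_
  rw [LinearEquiv.symm_apply_eq, splitPairEquiv_tprod]
  simp only [updatePair, LinearMap.id_apply, Fin.val_castAdd, Fin.val_natAdd]
  congr 3 <;> simp (disch := omega) only [if_neg, ↓reduceIte]

lemma TOp_tprod (R : V ⊗[K] V →ₗ[K] V ⊗[K] V) {N i : ℕ} (h : i + 2 ≤ N)
    (f : Fin N → V) (S : Finset (V × V))
    (hS : R (f ⟨i, by omega⟩ ⊗ₜ[K] f ⟨i + 1, by omega⟩) = ∑ p ∈ S, p.1 ⊗ₜ[K] p.2) :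
    TOp K V R N i (tprod K f) = ∑ p ∈ S, tprod K (updatePair f i p.1 p.2) := by
  simp only [TOp, dif_pos h, LinearMap.coe_comp, Function.comp_apply, LinearEquiv.coe_coe]
  rw [castPow_tprod, TOpAux_tprod R i (N - i - 2) _ S hS, map_sum]
  refine Finset.sum_congr rfl fun p _ => ?_
  rw [castPow_tprod]
  rfl

lemma TOp_of_lt (R : V ⊗[K] V →ₗ[K] V ⊗[K] V) {N i : ℕ} (h : N < i + 2) :
    TOp K V R N i = 1 := by
  rw [TOp, dif_neg (by omega)]
  rfl

end PureTensor

section ConsSnoc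

variable (K V) in
noncomputable def consPow (M : ℕ) : V →ₗ[K] (⨂[K] _ : Fin M, V) →ₗ[K] ⨂[K] _ : Fin (M + 1), V :=
  (TensorProduct.mk K _ _).compr₂
      ((castPow K V (Nat.add_comm 1 M)).toLinearMap ∘ₗ (mulPow K V 1 M).toLinearMap) ∘ₗ
    (oneEquiv K V).symm.toLinearMap

variable (K V) in
noncomputable def snocPow (M : ℕ) : V →ₗ[K] (⨂[K] _ : Fin M, V) →ₗ[K] ⨂[K] _ : Fin (M + 1), V :=
  (TensorProduct.mk K _ _).flip.compr₂ (mulPow K V M 1).toLinearMap ∘ₗ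
    (oneEquiv K V).symm.toLinearMap

lemma consPow_tprod {M : ℕ} (u : V) (f : Fin M → V) :
    consPow K V M u (tprod K f) = PiTensorProduct.tprod K (Fin.cons u f) := by
  simp only [consPow, LinearMap.coe_comp, Function.comp_apply, LinearMap.compr₂_apply,
    LinearEquiv.coe_coe, TensorProduct.mk_apply, oneEquiv_symm_apply, mulPow_tprod, castPow_tprod]
  congr 1
  funext j
  refine Fin.cases ?_ (fun i => ?_) j
  · rw [show Fin.cast (Nat.add_comm 1 M).symm 0 = Fin.castAdd M (0 : Fin 1) from rfl,
      finSumFinEquiv_symm_apply_castAdd]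
    rfl
  · rw [show Fin.cast (Nat.add_comm 1 M).symm i.succ = Fin.natAdd 1 i by ext; simp; omega,
      finSumFinEquiv_symm_apply_natAdd]
    rfl

lemma snocPow_tprod {M : ℕ} (w : V) (f : Fin M → V) :
    snocPow K V M w (tprod K f) = PiTensorProduct.tprod K (Fin.snoc f w) := by
  simp only [snocPow, LinearMap.coe_comp, Function.comp_apply, LinearMap.compr₂_apply,
    LinearEquiv.coe_coe, LinearMap.flip_apply, TensorProduct.mk_apply, oneEquiv_symm_apply,
    mulPow_tprod]
  congr 1
  funext j
  refine Fin.lastCases ?_ (fun i => ?_) j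
  · rw [show Fin.last M = Fin.natAdd M (0 : Fin 1) from rfl, finSumFinEquiv_symm_apply_natAdd]
    exact (Fin.snoc_last (α := fun _ => V) w f).symm
  · rw [show Fin.castSucc i = Fin.castAdd 1 i from rfl, finSumFinEquiv_symm_apply_castAdd]
    exact (Fin.snoc_castSucc (α := fun _ => V) w f i).symm

lemma consPow_comp_snocPow {M : ℕ} (u w : V) :
    consPow K V (M + 1) u ∘ₗ snocPow K V M w = snocPow K V (M + 1) w ∘ₗ consPow K V M u := by
  ext f
  simp only [LinearMap.compMultilinearMap_apply, LinearMap.coe_comp, Function.comp_apply,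
    snocPow_tprod, consPow_tprod, Fin.cons_snoc_eq_snoc_cons]

lemma LinearMap.ext_consPow {M : ℕ} {W : Type*} [AddCommGroup W] [Module K W]
    {g h : (⨂[K] _ : Fin (M + 1), V) →ₗ[K] W}
    (H : ∀ u : V, g ∘ₗ consPow K V M u = h ∘ₗ consPow K V M u) : g = h := by
  ext f
  rw [LinearMap.compMultilinearMap_apply, LinearMap.compMultilinearMap_apply]
  have hf := LinearMap.congr_fun (H (f 0)) (tprod K (Fin.tail f))
  simpa only [LinearMap.coe_comp, Function.comp_apply, consPow_tprod, Fin.cons_self_tail] using hf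

lemma LinearMap.ext_snocPow {M : ℕ} {W : Type*} [AddCommGroup W] [Module K W]
    {g h : (⨂[K] _ : Fin (M + 1), V) →ₗ[K] W}
    (H : ∀ w : V, g ∘ₗ snocPow K V M w = h ∘ₗ snocPow K V M w) : g = h := by
  ext f
  rw [LinearMap.compMultilinearMap_apply, LinearMap.compMultilinearMap_apply]
  have hf := LinearMap.congr_fun (H (f (Fin.last M))) (tprod K (Fin.init f))
  simpa only [LinearMap.coe_comp, Function.comp_apply, snocPow_tprod, Fin.snoc_init_self] using hf

end ConsSnoc

section Chain

variable {G : Type*} [Monoid G] (T : ℕ → G)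

def chain (s : ℕ) : ℕ → G
  | 0 => 1
  | k + 1 => T (s + k) * chain s k

lemma chain_zero_succ (k : ℕ) : chain T 0 (k + 1) = T k * chain T 0 k := by
  rw [chain, zero_add]

lemma chain_one_succ (k : ℕ) : chain T 1 (k + 1) = T (k + 1) * chain T 1 k := by
  rw [chain, add_comm]

lemma chain_succ_mul (s : ℕ) : ∀ k, chain T (s + 1) k * T s = chain T s (k + 1)
  | 0 => by simp [chain]
  | k + 1 => by
    rw [chain, mul_assoc, chain_succ_mul s k, chain, add_right_comm]
    rfl

lemma commute_chain {j s : ℕ} :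
    ∀ {k}, (∀ i < s + k, Commute (T i) (T j)) → Commute (T j) (chain T s k)
  | 0, _ => Commute.one_right _
  | k + 1, h => ((h (s + k) (by omega)).symm).mul_right (commute_chain fun i hi => h i (by omega))

/-- With the paper's 1-based generators `T_{i+1} = T i`, this is `T_ρ T_1 = T_{n+1} T_ρ`, where
`T_ρ = chain T 0 n * chain T 1 n` for the longest distinguished coset representative `ρ`. -/
theorem chain_mul_chain_mul_eq :
    ∀ {n : ℕ}, (∀ i j, i + 2 ≤ j → j ≤ n → Commute (T i) (T j)) →
      (∀ i < n, T i * T (i + 1) * T i = T (i + 1) * T i * T (i + 1)) →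
      chain T 0 n * chain T 1 n * T 0 = T n * (chain T 0 n * chain T 1 n)
  | 0, _, _ => by simp [chain]
  | n + 1, hfar, hbraid => by
    have IH := chain_mul_chain_mul_eq (n := n) (fun i j hij hj => hfar i j hij (by omega))
      (fun i hi => hbraid i (by omega))
    have hc : Commute (T (n + 1)) (chain T 0 n) :=
      commute_chain T fun i hi => hfar i (n + 1) (by omega) le_rfl
    rw [mul_assoc, chain_succ_mul] at IH ⊢
    calc chain T 0 (n + 1) * chain T 0 (n + 2)
        = T n * (T (n + 1) * (chain T 0 n * chain T 0 (n + 1))) := by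
          rw [chain_zero_succ T (n + 1)]
          nth_rw 1 [chain_zero_succ T n]
          rw [mul_assoc, ← mul_assoc (chain T 0 n), ← hc.eq, mul_assoc]
      _ = T n * T (n + 1) * T n * (chain T 0 n * chain T 1 n) := by
          rw [IH]
          simp only [mul_assoc]
      _ = T (n + 1) * T n * T (n + 1) * (chain T 0 n * chain T 1 n) := by
          rw [hbraid n (by omega)]
      _ = T (n + 1) * (chain T 0 (n + 1) * chain T 1 (n + 1)) := by
          rw [chain_zero_succ T n, chain_one_succ T n]
          simp only [mul_assoc]
          rw [← mul_assoc (T (n + 1)) (chain T 0 n), hc.eq, mul_assoc]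

end Chain

section Intertwining

variable {W W' : Type*} [AddCommGroup W] [Module K W] [AddCommGroup W'] [Module K W']

lemma mul_comp_of_comp {φ : W →ₗ[K] W'} {A B : Module.End K W} {A' B' : Module.End K W'}
    (hA : A' ∘ₗ φ = φ ∘ₗ A) (hB : B' ∘ₗ φ = φ ∘ₗ B) : (A' * B') ∘ₗ φ = φ ∘ₗ (A * B) := by
  rw [Module.End.mul_eq_comp, Module.End.mul_eq_comp, LinearMap.comp_assoc, hB,
    ← LinearMap.comp_assoc, hA, LinearMap.comp_assoc]

lemma braid_comp_of_comp {φ : W →ₗ[K] W'} {A B : Module.End K W} {A' B' : Module.End K W'}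
    (hA : A' ∘ₗ φ = φ ∘ₗ A) (hB : B' ∘ₗ φ = φ ∘ₗ B) (hAB : A * B * A = B * A * B) :
    (A' * B' * A') ∘ₗ φ = (B' * A' * B') ∘ₗ φ := by
  rw [mul_comp_of_comp (mul_comp_of_comp hA hB) hA, hAB,
    ← mul_comp_of_comp (mul_comp_of_comp hB hA) hB]

lemma chain_comp_of_comp {T : ℕ → Module.End K W} {T' : ℕ → Module.End K W'} {φ : W →ₗ[K] W'}
    {d s : ℕ} : ∀ {k : ℕ}, (∀ i < s + k, T' (i + d) ∘ₗ φ = φ ∘ₗ T i) →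
      chain T' (s + d) k ∘ₗ φ = φ ∘ₗ chain T s k
  | 0, _ => rfl
  | k + 1, h => mul_comp_of_comp
      (by rw [show s + d + k = s + k + d by omega]; exact h _ (by omega))
      (chain_comp_of_comp fun i hi => h i (by omega))

end Intertwining

section Braid

lemma TOp_succ_comp_consPow (R : V ⊗[K] V →ₗ[K] V ⊗[K] V) {M : ℕ} (i : ℕ) (u : V) :
    TOp K V R (M + 1) (i + 1) ∘ₗ consPow K V M u = consPow K V M u ∘ₗ TOp K V R M i := by
  by_cases h : i + 2 ≤ M
  · ext f
    obtain ⟨S, hS⟩ := TensorProduct.exists_finset (R (f ⟨i, by omega⟩ ⊗ₜ[K] f ⟨i + 1, by omega⟩))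
    simp only [LinearMap.compMultilinearMap_apply, LinearMap.coe_comp, Function.comp_apply,
      consPow_tprod, TOp_tprod R h f S hS,
      TOp_tprod R (by omega : i + 1 + 2 ≤ M + 1) (Fin.cons u f) S hS, map_sum, updatePair_cons]
  · rw [TOp_of_lt R (by omega), TOp_of_lt R (by omega)]
    rfl

lemma TOp_comp_snocPow (R : V ⊗[K] V →ₗ[K] V ⊗[K] V) {M i : ℕ} (h : i + 2 ≤ M) (w : V) :
    TOp K V R (M + 1) i ∘ₗ snocPow K V M w = snocPow K V M w ∘ₗ TOp K V R M i := by
  ext f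
  obtain ⟨S, hS⟩ := TensorProduct.exists_finset (R (f ⟨i, by omega⟩ ⊗ₜ[K] f ⟨i + 1, by omega⟩))
  have hS' : R ((Fin.snoc f w : Fin (M + 1) → V) ⟨i, by omega⟩ ⊗ₜ[K]
      (Fin.snoc f w : Fin (M + 1) → V) ⟨i + 1, by omega⟩) = ∑ p ∈ S, p.1 ⊗ₜ[K] p.2 := by
    rw [← hS, show (⟨i, _⟩ : Fin (M + 1)) = Fin.castSucc ⟨i, by omega⟩ from rfl,
      show (⟨i + 1, _⟩ : Fin (M + 1)) = Fin.castSucc ⟨i + 1, by omega⟩ from rfl,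
      Fin.snoc_castSucc, Fin.snoc_castSucc]
  simp only [LinearMap.compMultilinearMap_apply, LinearMap.coe_comp, Function.comp_apply,
    snocPow_tprod, TOp_tprod R h f S hS, TOp_tprod R (by omega : i + 2 ≤ M + 1) _ S hS',
    map_sum, updatePair_snoc f w h]

lemma TOp_commute (R : V ⊗[K] V →ₗ[K] V ⊗[K] V) {N i j : ℕ} (hij : i + 2 ≤ j) :
    Commute (TOp K V R N i) (TOp K V R N j) := by
  rcases lt_or_ge N (j + 2) with hjN | hjN
  · rw [TOp_of_lt R hjN]
    exact Commute.one_right _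
  ext f
  simp only [LinearMap.compMultilinearMap_apply, Module.End.mul_apply]
  obtain ⟨Si, hSi⟩ := TensorProduct.exists_finset (R (f ⟨i, by omega⟩ ⊗ₜ[K] f ⟨i + 1, by omega⟩))
  obtain ⟨Sj, hSj⟩ := TensorProduct.exists_finset (R (f ⟨j, by omega⟩ ⊗ₜ[K] f ⟨j + 1, by omega⟩))
  have hiS : ∀ q ∈ Sj, TOp K V R N i (tprod K (updatePair f j q.1 q.2))
      = ∑ p ∈ Si, tprod K (updatePair (updatePair f j q.1 q.2) i p.1 p.2) := fun q _ =>
    TOp_tprod R (by omega) _ Si (by simp (disch := omega) only [updatePair, if_neg]; exact hSi)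
  have hjS : ∀ p ∈ Si, TOp K V R N j (tprod K (updatePair f i p.1 p.2))
      = ∑ q ∈ Sj, tprod K (updatePair (updatePair f i p.1 p.2) j q.1 q.2) := fun p _ =>
    TOp_tprod R hjN _ Sj (by simp (disch := omega) only [updatePair, if_neg]; exact hSj)
  rw [TOp_tprod R hjN f Sj hSj, TOp_tprod R (by omega) f Si hSi, map_sum, map_sum,
    Finset.sum_congr rfl hiS, Finset.sum_congr rfl hjS, Finset.sum_comm]
  refine Finset.sum_congr rfl fun p _ => Finset.sum_congr rfl fun q _ => ?_
  congr 1
  funext m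
  simp only [updatePair]
  split_ifs <;> first | rfl | omega

lemma TOp_braid (R : V ⊗[K] V →ₗ[K] V ⊗[K] V)
    (hbraid : TOp K V R 3 0 * TOp K V R 3 1 * TOp K V R 3 0
      = TOp K V R 3 1 * TOp K V R 3 0 * TOp K V R 3 1) :
    ∀ {N i : ℕ}, i + 3 ≤ N → TOp K V R N i * TOp K V R N (i + 1) * TOp K V R N i
      = TOp K V R N (i + 1) * TOp K V R N i * TOp K V R N (i + 1)
  | 3, 0, _ => hbraid
  | N + 1, i + 1, h => LinearMap.ext_consPow fun u =>
      braid_comp_of_comp (TOp_succ_comp_consPow R i u) (TOp_succ_comp_consPow R (i + 1) u)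
        (TOp_braid R hbraid (by omega))
  | N + 4, 0, _ => LinearMap.ext_snocPow fun w =>
      braid_comp_of_comp (TOp_comp_snocPow R (by omega) w) (TOp_comp_snocPow R (by omega) w)
        (TOp_braid R hbraid (by omega))

end Braid

section Permutations

lemma tau_apply (k x : ℕ) : tau k x = if x = k then k + 1 else if x = k + 1 then k else x := by
  simp [tau, Equiv.swap_apply_def]

lemma cyc_self (n : ℕ) : cyc n n = 1 := by
  simp [cyc]

lemma cyc_eq_cyc_succ_mul_tau {n k : ℕ} (h : k < n) : cyc n k = cyc n (k + 1) * tau k := by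
  rcases Nat.lt_or_ge (k + 1) n with h' | h'
  · rw [cyc, if_neg (by omega), cyc, if_neg (by omega), show n - k = n - (k + 1) + 1 by omega,
      List.range_succ, List.map_append, List.prod_append, List.map_singleton, List.prod_singleton,
      show n - 1 - (n - (k + 1)) = k by omega]
  · obtain rfl : n = k + 1 := by omega
    simp [cyc]

lemma cyc_apply {n k : ℕ} (hk : k ≤ n) (x : ℕ) :
    cyc n k x = if x < k then x else if x = k then n else if x ≤ n then x - 1 else x := by
  induction h : n - k generalizing k x with
  | zero =>
    obtain rfl : k = n := by omega
    rw [cyc_self]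
    split_ifs <;> simp <;> omega
  | succ d IH =>
    rw [cyc_eq_cyc_succ_mul_tau (by omega), Equiv.Perm.mul_apply, IH (by omega) _ (by omega),
      tau_apply]
    split_ifs <;> omega

lemma invLen_cyc {n k : ℕ} (hk : k ≤ n) : invLen (n + 1) (cyc n k) = n - k := by
  have hinv : ((Finset.range (n + 1) ×ˢ Finset.range (n + 1)).filter
      (fun p => p.1 < p.2 ∧ cyc n k p.2 < cyc n k p.1)) = {k} ×ˢ Finset.Ioc k n := by
    ext ⟨a, b⟩
    simp only [Finset.mem_filter, Finset.mem_product, Finset.mem_range, Finset.mem_singleton,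
      Finset.mem_Ioc, cyc_apply hk]
    split_ifs <;> omega
  rw [invLen, hinv, Finset.card_product, Finset.card_singleton, Nat.card_Ioc, one_mul]

lemma invLen_tau {n k : ℕ} (hk : k < n) : invLen (n + 1) (tau k) = 1 := by
  have hinv : ((Finset.range (n + 1) ×ˢ Finset.range (n + 1)).filter
      (fun p => p.1 < p.2 ∧ tau k p.2 < tau k p.1)) = {(k, k + 1)} := by
    ext ⟨a, b⟩
    simp only [Finset.mem_filter, Finset.mem_product, Finset.mem_range, Finset.mem_singleton,
      tau_apply, Prod.mk.injEq]
    split_ifs <;> omega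
  rw [invLen, hinv, Finset.card_singleton]

lemma map_cyc_eq_chain {G : Type*} [Monoid G] (T : ℕ → G) {n : ℕ}
    (Tact : Equiv.Perm ℕ → G) (hTact1 : Tact 1 = 1)
    (hTactGen : ∀ i : ℕ, i + 2 ≤ n + 1 → Tact (tau i) = T i)
    (hTactMul : ∀ π σ : Equiv.Perm ℕ,
      (∀ m, n + 1 ≤ m → π m = m) → (∀ m, n + 1 ≤ m → σ m = m) →
      invLen (n + 1) (π * σ) = invLen (n + 1) π + invLen (n + 1) σ →
        Tact (π * σ) = Tact π * Tact σ)
    {k : ℕ} (hk : k ≤ n) : Tact (cyc n k) = chain T k (n - k) := by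
  induction h : n - k generalizing k with
  | zero =>
    obtain rfl : k = n := by omega
    rw [cyc_self, hTact1]
    rfl
  | succ d IH =>
    have hkn : k < n := by omega
    have hcyc_fix : ∀ m, n + 1 ≤ m → cyc n (k + 1) m = m := fun m hm => by
      rw [cyc_apply hkn]
      split_ifs <;> omega
    have htau_fix : ∀ m, n + 1 ≤ m → tau k m = m := fun m hm => by
      rw [tau_apply]
      split_ifs <;> omega
    have hlen : invLen (n + 1) (cyc n (k + 1) * tau k)
        = invLen (n + 1) (cyc n (k + 1)) + invLen (n + 1) (tau k) := by
      rw [← cyc_eq_cyc_succ_mul_tau hkn, invLen_cyc hk, invLen_cyc hkn, invLen_tau hkn]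
      omega
    rw [cyc_eq_cyc_succ_mul_tau hkn, hTactMul _ _ hcyc_fix htau_fix hlen, IH hkn (by omega),
      hTactGen k (by omega), chain_succ_mul]

end Permutations

section PairInsertion

noncomputable def consPair {M : ℕ} (t : ⨂[K] _ : Fin M, V) :
    V ⊗[K] V →ₗ[K] ⨂[K] _ : Fin (M + 2), V :=
  TensorProduct.lift ((consPow K V (M + 1)).compl₂ ((consPow K V M).flip t))

noncomputable def snocPair {M : ℕ} (t : ⨂[K] _ : Fin M, V) :
    V ⊗[K] V →ₗ[K] ⨂[K] _ : Fin (M + 2), V :=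
  TensorProduct.lift ((snocPow K V (M + 1)).flip ∘ₗ (snocPow K V M).flip t)

lemma consPair_tmul {M : ℕ} (t : ⨂[K] _ : Fin M, V) (x y : V) :
    consPair t (x ⊗ₜ[K] y) = consPow K V (M + 1) x (consPow K V M y t) := rfl

lemma snocPair_tmul {M : ℕ} (t : ⨂[K] _ : Fin M, V) (x y : V) :
    snocPair t (x ⊗ₜ[K] y) = snocPow K V (M + 1) y (snocPow K V M x t) := rfl

lemma snocPow_snocPow {M : ℕ} (t : ⨂[K] _ : Fin M, V) (x y : V) :
    snocPow K V (M + 1) y (snocPow K V M x t) = mulPow K V M 2 (t ⊗ₜ[K] tprod K ![x, y]) := by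
  induction t using PiTensorProduct.induction_on with
  | smul_tprod r f =>
    rw [map_smul, map_smul, ← TensorProduct.smul_tmul', map_smul, snocPow_tprod, snocPow_tprod,
      mulPow_tprod]
    congr 2
    funext j
    refine Fin.lastCases ?_ (fun j => Fin.lastCases ?_ (fun j => ?_) j) j
    · rw [Fin.snoc_last, show Fin.last (M + 1) = Fin.natAdd M (1 : Fin 2) from rfl,
        finSumFinEquiv_symm_apply_natAdd]
      rfl
    · rw [Fin.snoc_castSucc, Fin.snoc_last,
        show (Fin.last M).castSucc = Fin.natAdd M (0 : Fin 2) from rfl,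
        finSumFinEquiv_symm_apply_natAdd]
      rfl
    · rw [Fin.snoc_castSucc, Fin.snoc_castSucc, show j.castSucc.castSucc = Fin.castAdd 2 j from rfl,
        finSumFinEquiv_symm_apply_castAdd]
      rfl
  | add a b ha hb => rw [map_add, map_add, ha, hb, TensorProduct.add_tmul, map_add]

lemma snocPair_eq {M : ℕ} (t : ⨂[K] _ : Fin M, V) :
    snocPair t = (mulPow K V M 2).toLinearMap ∘ₗ TensorProduct.mk K _ _ t ∘ₗ
      (pairEquiv K V).symm.toLinearMap :=
  TensorProduct.ext' fun x y => by
    rw [snocPair_tmul, snocPow_snocPow]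
    simp [pairEquiv_symm_tmul]

lemma TensorProduct.mk_injective_of_ne_zero {A B : Type*} [AddCommGroup A] [Module K A]
    [AddCommGroup B] [Module K B] {t : A} (ht : t ≠ 0) :
    Function.Injective (TensorProduct.mk K A B t) := by
  obtain ⟨φ, hφ⟩ : ∃ φ : Module.Dual K A, φ t ≠ 0 := by
    by_contra! h
    exact ht ((Module.forall_dual_apply_eq_zero_iff K t).mp h)
  intro z₁ z₂ h
  have h' := congrArg (TensorProduct.lid K B ∘ TensorProduct.map φ LinearMap.id) h
  simp only [Function.comp_apply, TensorProduct.mk_apply, TensorProduct.map_tmul,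
    LinearMap.id_apply, TensorProduct.lid_tmul] at h'
  exact smul_right_injective B hφ h'

lemma snocPair_injective {M : ℕ} {t : ⨂[K] _ : Fin M, V} (ht : t ≠ 0) :
    Function.Injective (snocPair t) := by
  rw [snocPair_eq]
  exact (mulPow K V M 2).injective.comp
    ((TensorProduct.mk_injective_of_ne_zero ht).comp (pairEquiv K V).symm.injective)

end PairInsertion

section Commutation

variable (R : V ⊗[K] V →ₗ[K] V ⊗[K] V)

lemma TOp_zero_comp_consPair {M : ℕ} (t : ⨂[K] _ : Fin M, V) :
    TOp K V R (M + 2) 0 ∘ₗ consPair t = consPair t ∘ₗ R := by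
  refine TensorProduct.ext' fun x y => ?_
  obtain ⟨S, hS⟩ := TensorProduct.exists_finset (R (x ⊗ₜ[K] y))
  simp only [LinearMap.comp_apply, hS, map_sum, consPair_tmul]
  induction t using PiTensorProduct.induction_on with
  | smul_tprod r f =>
    simp only [map_smul, ← Finset.smul_sum, consPow_tprod]
    rw [TOp_tprod R (by omega) _ S hS]
    congr 1
    refine Finset.sum_congr rfl fun p _ => congrArg _ (funext fun j => ?_)
    refine Fin.cases ?_ (fun j => Fin.cases ?_ (fun j => ?_) j) j <;> simp [updatePair]
  | add a b ha hb => simp only [map_add, ha, hb, Finset.sum_add_distrib]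

lemma TOp_comp_snocPair {M : ℕ} (t : ⨂[K] _ : Fin M, V) :
    TOp K V R (M + 2) M ∘ₗ snocPair t = snocPair t ∘ₗ R := by
  refine TensorProduct.ext' fun x y => ?_
  obtain ⟨S, hS⟩ := TensorProduct.exists_finset (R (x ⊗ₜ[K] y))
  simp only [LinearMap.comp_apply, hS, map_sum, snocPair_tmul]
  induction t using PiTensorProduct.induction_on with
  | smul_tprod r f =>
    simp only [map_smul, ← Finset.smul_sum, snocPow_tprod]
    have hS' : R ((Fin.snoc (Fin.snoc f x) y : Fin (M + 2) → V) ⟨M, by omega⟩ ⊗ₜ[K]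
        (Fin.snoc (Fin.snoc f x) y : Fin (M + 2) → V) ⟨M + 1, by omega⟩)
        = ∑ p ∈ S, p.1 ⊗ₜ[K] p.2 := by
      rw [show (⟨M, _⟩ : Fin (M + 2)) = (Fin.last M).castSucc from rfl,
        show (⟨M + 1, _⟩ : Fin (M + 2)) = Fin.last (M + 1) from rfl,
        Fin.snoc_castSucc, Fin.snoc_last, Fin.snoc_last, hS]
    rw [TOp_tprod R le_rfl _ S hS']
    congr 1
    refine Finset.sum_congr rfl fun p _ => congrArg _ (funext fun j => ?_)
    refine Fin.lastCases ?_ (fun j => Fin.lastCases ?_ (fun j => ?_) j) j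
    iterate 2 simp [updatePair]
    simp (disch := omega) only [updatePair, Fin.val_castSucc, if_neg, Fin.snoc_castSucc]
  | add a b ha hb => simp only [map_add, ha, hb, Finset.sum_add_distrib]

lemma chain_mul_chain_comp_consPair {n : ℕ} (t : ⨂[K] _ : Fin n, V) (θ : V →ₗ[K] V)
    (hθ : ∀ v, chain (TOp K V R (n + 1)) 0 n (consPow K V n v t) = snocPow K V n (θ v) t) :
    (chain (TOp K V R (n + 2)) 0 n * chain (TOp K V R (n + 2)) 1 n) ∘ₗ consPair t
      = snocPair t ∘ₗ TensorProduct.map θ θ := by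
  have hcons (u : V) : chain (TOp K V R (n + 2)) 1 n ∘ₗ consPow K V (n + 1) u
      = consPow K V (n + 1) u ∘ₗ chain (TOp K V R (n + 1)) 0 n :=
    chain_comp_of_comp (d := 1) fun i _ => TOp_succ_comp_consPow R i u
  have hsnoc (w : V) : chain (TOp K V R (n + 2)) 0 n ∘ₗ snocPow K V (n + 1) w
      = snocPow K V (n + 1) w ∘ₗ chain (TOp K V R (n + 1)) 0 n :=
    chain_comp_of_comp (d := 0) fun i hi => TOp_comp_snocPow R (by omega) w
  refine TensorProduct.ext' fun x y => ?_
  calc chain (TOp K V R (n + 2)) 0 n (chain (TOp K V R (n + 2)) 1 n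
          (consPow K V (n + 1) x (consPow K V n y t)))
      = chain (TOp K V R (n + 2)) 0 n (consPow K V (n + 1) x (snocPow K V n (θ y) t)) := by
        rw [← LinearMap.comp_apply _ (consPow K V (n + 1) x), hcons, LinearMap.comp_apply, hθ]
    _ = snocPow K V (n + 1) (θ y) (snocPow K V n (θ x) t) := by
        rw [← LinearMap.comp_apply (consPow K V (n + 1) x), consPow_comp_snocPow,
          LinearMap.comp_apply, ← LinearMap.comp_apply _ (snocPow K V (n + 1) (θ y)), hsnoc,
          LinearMap.comp_apply, hθ]

theorem map_comp_eq_comp_map_of_chain_consPow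
    (hbraid : TOp K V R 3 0 * TOp K V R 3 1 * TOp K V R 3 0
      = TOp K V R 3 1 * TOp K V R 3 0 * TOp K V R 3 1)
    {n : ℕ} {t : ⨂[K] _ : Fin n, V} (ht : t ≠ 0) (θ : V →ₗ[K] V)
    (hθ : ∀ v, chain (TOp K V R (n + 1)) 0 n (consPow K V n v t) = snocPow K V n (θ v) t) :
    TensorProduct.map θ θ ∘ₗ R = R ∘ₗ TensorProduct.map θ θ := by
  set ρ := chain (TOp K V R (n + 2)) 0 n * chain (TOp K V R (n + 2)) 1 n
  have hρ : ρ * TOp K V R (n + 2) 0 = TOp K V R (n + 2) n * ρ :=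
    chain_mul_chain_mul_eq _ (fun i j hij _ => TOp_commute R hij)
      (fun i hi => TOp_braid R hbraid (by omega))
  have hρt : ρ ∘ₗ consPair t = snocPair t ∘ₗ TensorProduct.map θ θ :=
    chain_mul_chain_comp_consPair R t θ hθ
  rw [← LinearMap.cancel_left (snocPair_injective ht)]
  calc snocPair t ∘ₗ TensorProduct.map θ θ ∘ₗ R
      = ρ ∘ₗ TOp K V R (n + 2) 0 ∘ₗ consPair t := by
        rw [TOp_zero_comp_consPair]
        simp only [← LinearMap.comp_assoc, hρt]
    _ = TOp K V R (n + 2) n ∘ₗ ρ ∘ₗ consPair t := by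
        simp only [← LinearMap.comp_assoc, ← Module.End.mul_eq_comp, hρ]
    _ = snocPair t ∘ₗ R ∘ₗ TensorProduct.map θ θ := by
        simp only [hρt, ← LinearMap.comp_assoc, TOp_comp_snocPair]

end Commutation

section Quotients

noncomputable def TensorAlgebra.congr {S M N : Type*} [CommSemiring S] [AddCommMonoid M]
    [Module S M] [AddCommMonoid N] [Module S N] (e : M ≃ₗ[S] N) :
    TensorAlgebra S M ≃ₐ[S] TensorAlgebra S N :=
  AlgEquiv.ofAlgHom (TensorAlgebra.lift S ((TensorAlgebra.ι S).comp e.toLinearMap))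
    (TensorAlgebra.lift S ((TensorAlgebra.ι S).comp e.symm.toLinearMap))
    (TensorAlgebra.hom_ext (by ext; simp)) (TensorAlgebra.hom_ext (by ext; simp))

@[simp]
lemma TensorAlgebra.congr_ι {S M N : Type*} [CommSemiring S] [AddCommMonoid M]
    [Module S M] [AddCommMonoid N] [Module S N] (e : M ≃ₗ[S] N) (m : M) :
    TensorAlgebra.congr e (TensorAlgebra.ι S m) = TensorAlgebra.ι S (e m) := by
  simp [TensorAlgebra.congr]

noncomputable def RingQuot.algEquivOfRel {S A : Type*} [CommSemiring S] [Semiring A]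
    [Algebra S A] {s : A → A → Prop} (f : A ≃ₐ[S] A) (hf : ∀ ⦃x y⦄, s x y → s (f x) (f y))
    (hf' : ∀ ⦃x y⦄, s x y → s (f.symm x) (f.symm y)) : RingQuot s ≃ₐ[S] RingQuot s :=
  AlgEquiv.ofAlgHom
    (RingQuot.liftAlgHom S ⟨(RingQuot.mkAlgHom S s).comp f, fun _ _ h => by
      simp only [AlgHom.comp_apply]
      exact RingQuot.mkAlgHom_rel S (hf h)⟩)
    (RingQuot.liftAlgHom S ⟨(RingQuot.mkAlgHom S s).comp f.symm, fun _ _ h => by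
      simp only [AlgHom.comp_apply]
      exact RingQuot.mkAlgHom_rel S (hf' h)⟩)
    (RingQuot.ringQuot_ext' S _ _ (by ext; simp [RingQuot.liftAlgHom_mkAlgHom_apply]))
    (RingQuot.ringQuot_ext' S _ _ (by ext; simp [RingQuot.liftAlgHom_mkAlgHom_apply]))

@[simp]
lemma RingQuot.algEquivOfRel_mkAlgHom {S A : Type*} [CommSemiring S] [Semiring A]
    [Algebra S A] {s : A → A → Prop} (f : A ≃ₐ[S] A) (hf : ∀ ⦃x y⦄, s x y → s (f x) (f y))
    (hf' : ∀ ⦃x y⦄, s x y → s (f.symm x) (f.symm y)) (x : A) :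
    RingQuot.algEquivOfRel f hf hf' (RingQuot.mkAlgHom S s x) = RingQuot.mkAlgHom S s (f x) := by
  simp [RingQuot.algEquivOfRel, RingQuot.liftAlgHom_mkAlgHom_apply]

lemma TensorAlgebra.congr_symm {S M N : Type*} [CommSemiring S] [AddCommMonoid M]
    [Module S M] [AddCommMonoid N] [Module S N] (e : M ≃ₗ[S] N) :
    (TensorAlgebra.congr e).symm = TensorAlgebra.congr e.symm := rfl

lemma RingQuot.exists_algEquiv_congr_ι {S M : Type*} [CommSemiring S] [AddCommMonoid M]
    [Module S M] {s : TensorAlgebra S M → TensorAlgebra S M → Prop} (e : M ≃ₗ[S] M)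
    (he : ∀ ⦃x y⦄, s x y → s (TensorAlgebra.congr e x) (TensorAlgebra.congr e y))
    (he' : ∀ ⦃x y⦄, s x y → s (TensorAlgebra.congr e.symm x) (TensorAlgebra.congr e.symm y)) :
    ∃ f : RingQuot s ≃ₐ[S] RingQuot s, ∀ m : M,
      f (RingQuot.mkAlgHom S s (TensorAlgebra.ι S m))
        = RingQuot.mkAlgHom S s (TensorAlgebra.ι S (e m)) :=
  ⟨RingQuot.algEquivOfRel (TensorAlgebra.congr e) he (TensorAlgebra.congr_symm e ▸ he'),
    fun m => by simp⟩

lemma TensorProduct.map_symm_comp_eq_comp_map_symm {S M : Type*} [CommSemiring S]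
    [AddCommMonoid M] [Module S M] (e : M ≃ₗ[S] M) {T : M ⊗[S] M →ₗ[S] M ⊗[S] M}
    (h : TensorProduct.map e.toLinearMap e.toLinearMap ∘ₗ T
      = T ∘ₗ TensorProduct.map e.toLinearMap e.toLinearMap) :
    TensorProduct.map e.symm.toLinearMap e.symm.toLinearMap ∘ₗ T
      = T ∘ₗ TensorProduct.map e.symm.toLinearMap e.symm.toLinearMap := by
  have h₁ : TensorProduct.map e.symm.toLinearMap e.symm.toLinearMap ∘ₗ
      TensorProduct.map e.toLinearMap e.toLinearMap = LinearMap.id := by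
    rw [← TensorProduct.map_comp, LinearEquiv.symm_comp, TensorProduct.map_id]
  have h₂ : TensorProduct.map e.toLinearMap e.toLinearMap ∘ₗ
      TensorProduct.map e.symm.toLinearMap e.symm.toLinearMap = LinearMap.id := by
    rw [← TensorProduct.map_comp, LinearEquiv.comp_symm, TensorProduct.map_id]
  calc TensorProduct.map e.symm.toLinearMap e.symm.toLinearMap ∘ₗ T
      = TensorProduct.map e.symm.toLinearMap e.symm.toLinearMap ∘ₗ
          (TensorProduct.map e.toLinearMap e.toLinearMap ∘ₗ T) ∘ₗ
            TensorProduct.map e.symm.toLinearMap e.symm.toLinearMap := by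
        rw [h, LinearMap.comp_assoc, h₂, LinearMap.comp_id]
    _ = T ∘ₗ TensorProduct.map e.symm.toLinearMap e.symm.toLinearMap := by
        rw [← LinearMap.comp_assoc, ← LinearMap.comp_assoc, h₁, LinearMap.id_comp]

variable {R : V ⊗[K] V →ₗ[K] V ⊗[K] V} {q : K}

lemma mur_tmul (x y : V) :
    mur K V (x ⊗ₜ[K] y) = TensorAlgebra.ι K x * TensorAlgebra.ι K y := by
  simp [mur]

lemma TensorAlgebra.congr_mur (e : V ≃ₗ[K] V) (z : V ⊗[K] V) :
    TensorAlgebra.congr e (mur K V z)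
      = mur K V (TensorProduct.map e.toLinearMap e.toLinearMap z) := by
  induction z using TensorProduct.induction_on with
  | zero => simp
  | tmul x y => simp [mur_tmul]
  | add a b ha hb => simp only [map_add, ha, hb]

lemma sub_smul_map_eq_map_sub_smul (e : V ≃ₗ[K] V)
    (h : TensorProduct.map e.toLinearMap e.toLinearMap ∘ₗ R
      = R ∘ₗ TensorProduct.map e.toLinearMap e.toLinearMap) (w : V ⊗[K] V) :
    (R - q • (LinearMap.id : V ⊗[K] V →ₗ[K] V ⊗[K] V))
        (TensorProduct.map e.toLinearMap e.toLinearMap w)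
      = TensorProduct.map e.toLinearMap e.toLinearMap
          ((R - q • (LinearMap.id : V ⊗[K] V →ₗ[K] V ⊗[K] V)) w) := by
  have hw := LinearMap.congr_fun h w
  simp only [LinearMap.coe_comp, Function.comp_apply] at hw
  simp only [LinearMap.sub_apply, LinearMap.smul_apply, LinearMap.id_apply, map_sub, map_smul, hw]

lemma relS_congr (e : V ≃ₗ[K] V)
    (h : TensorProduct.map e.toLinearMap e.toLinearMap ∘ₗ R
      = R ∘ₗ TensorProduct.map e.toLinearMap e.toLinearMap) ⦃x y : TensorAlgebra K V⦄
    (hxy : relS K V R q x y) :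
    relS K V R q (TensorAlgebra.congr e x) (TensorAlgebra.congr e y) := by
  obtain ⟨rfl, w, rfl⟩ := hxy
  exact ⟨map_zero _, TensorProduct.map e.toLinearMap e.toLinearMap w,
    by rw [TensorAlgebra.congr_mur, sub_smul_map_eq_map_sub_smul e h]⟩

lemma relL_congr (e : V ≃ₗ[K] V)
    (h : TensorProduct.map e.toLinearMap e.toLinearMap ∘ₗ R
      = R ∘ₗ TensorProduct.map e.toLinearMap e.toLinearMap) ⦃x y : TensorAlgebra K V⦄
    (hxy : relL K V R q x y) :
    relL K V R q (TensorAlgebra.congr e x) (TensorAlgebra.congr e y) := by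
  obtain ⟨rfl, w, hw, rfl⟩ := hxy
  exact ⟨map_zero _, TensorProduct.map e.toLinearMap e.toLinearMap w,
    by rw [sub_smul_map_eq_map_sub_smul e h, hw, map_zero], TensorAlgebra.congr_mur e w⟩

end Quotients

/-- Under the hypotheses `dim Υ^{(n)} = 1` and `Υ^{(n+1)} = 0`, the operator `θ ⊗ θ`
commutes with the Hecke symmetry `R`; consequently `θ` extends to (graded) algebra
automorphisms of `Λ(V,R)` and `S(V,R)`. -/
theorem stmt13 {K V : Type*} [Field K] [AddCommGroup V] [Module K V]
    (R : V ⊗[K] V →ₗ[K] V ⊗[K] V) (q : K)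
    (hbraid : TOp K V R 3 0 * TOp K V R 3 1 * TOp K V R 3 0
      = TOp K V R 3 1 * TOp K V R 3 0 * TOp K V R 3 1)
    (n : ℕ)
    (t : ⨂[K] _ : Fin n, V) (ht0 : t ≠ 0)
    (Tact : Equiv.Perm ℕ → Module.End K (⨂[K] _ : Fin (n + 1), V))
    (hTact1 : Tact 1 = 1)
    (hTactGen : ∀ i : ℕ, i + 2 ≤ n + 1 → Tact (tau i) = TOp K V R (n + 1) i)
    (hTactMul : ∀ π σ : Equiv.Perm ℕ,
      (∀ m, n + 1 ≤ m → π m = m) → (∀ m, n + 1 ≤ m → σ m = m) →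
      invLen (n + 1) (π * σ) = invLen (n + 1) π + invLen (n + 1) σ →
        Tact (π * σ) = Tact π * Tact σ)
    (θ : V ≃ₗ[K] V)
    (hθ : ∀ v : V,
      Tact (cyc n 0) ((castPow K V (show 1 + n = n + 1 by omega))
          ((mulPow K V 1 n) (((oneEquiv K V).symm v) ⊗ₜ[K] t)))
        = (mulPow K V n 1) (t ⊗ₜ[K] ((oneEquiv K V).symm (θ v)))) :
    TensorProduct.map θ.toLinearMap θ.toLinearMap ∘ₗ R
        = R ∘ₗ TensorProduct.map θ.toLinearMap θ.toLinearMap ∧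
    (∃ f : RingQuot (relS K V R q) ≃ₐ[K] RingQuot (relS K V R q),
      ∀ v : V, f (RingQuot.mkAlgHom K (relS K V R q) (TensorAlgebra.ι K v))
        = RingQuot.mkAlgHom K (relS K V R q) (TensorAlgebra.ι K (θ v))) ∧
    (∃ g : RingQuot (relL K V R q) ≃ₐ[K] RingQuot (relL K V R q),
      ∀ v : V, g (RingQuot.mkAlgHom K (relL K V R q) (TensorAlgebra.ι K v))
        = RingQuot.mkAlgHom K (relL K V R q) (TensorAlgebra.ι K (θ v))) := by
  have hcyc : Tact (cyc n 0) = chain (TOp K V R (n + 1)) 0 n :=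
    map_cyc_eq_chain _ Tact hTact1 hTactGen hTactMul (Nat.zero_le n)
  have hR : TensorProduct.map θ.toLinearMap θ.toLinearMap ∘ₗ R
      = R ∘ₗ TensorProduct.map θ.toLinearMap θ.toLinearMap :=
    map_comp_eq_comp_map_of_chain_consPow R hbraid ht0 θ.toLinearMap fun v => by
      rw [← hcyc]
      exact hθ v
  have hR' := TensorProduct.map_symm_comp_eq_comp_map_symm θ hR
  exact ⟨hR, RingQuot.exists_algEquiv_congr_ι θ (relS_congr θ hR) (relS_congr θ.symm hR'),
    RingQuot.exists_algEquiv_congr_ι θ (relL_congr θ hR) (relL_congr θ.symm hR')⟩
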